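/- arXiv:1610.00226 — 6 statements merged into one kernel-verified Lean document; each statement's English description precedes it below -/
import Mathlib

section
/- Let K/Q be cyclic of prime degree p with Galois group generated by σ, J the group of fractional ideals of K, and N = N_{K/Q} the ideal norm. Then every fractional ideal I with N(I) = (1) lies in the image of the map I ↦ I/σ(I); that is, ker N / im(1-σ) is trivial on J. -/
/-! `A ↦ A · S(A)⁻¹` is a homomorphism, so its image `H` contains `𝔓 · σ(𝔓)⁻¹` for every prime
`𝔓`, hence `𝔓 · τ(𝔓)⁻¹` for every `τ` in the Galois group, which `σ` generates. The Galois group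
acts transitively on the primes above a rational prime `ℓ`, so these all have the same class
modulo `H` and the same residue degree `f_ℓ`. If `I = ∏ 𝔓 ^ e_𝔓` has norm `1`, its `ℓ`-adic
valuation gives `f_ℓ · ∑_{𝔓 ∣ ℓ} e_𝔓 = 0`, so the class of `I` modulo `H` is trivial. -/

open NumberField IsDedekindDomain
open scoped nonZeroDivisors Pointwise

section CommGroup

variable {G ι : Type*} [CommGroup G]

theorem Finset.prod_zpow_eq_zpow_sum (s : Finset ι) (e : ι → ℤ) (c : G) :
    ∏ i ∈ s, c ^ e i = c ^ ∑ i ∈ s, e i := by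
  classical
  induction s using Finset.induction_on with
  | empty => simp
  | insert i s hi ih => rw [Finset.prod_insert hi, Finset.sum_insert hi, ih, zpow_add]

theorem prod_zpow_mem_of_div_mem_of_sum_eq_zero {H : Subgroup G} {s : Finset ι} {a : ι → G}
    {c : G} (ha : ∀ i ∈ s, a i / c ∈ H) {e : ι → ℤ} (he : ∑ i ∈ s, e i = 0) :
    ∏ i ∈ s, a i ^ e i ∈ H := by
  have hprod : ∏ i ∈ s, a i ^ e i = ∏ i ∈ s, (a i / c) ^ e i := by
    simp_rw [div_zpow, Finset.prod_div_distrib, Finset.prod_zpow_eq_zpow_sum, he, zpow_zero,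
      _root_.div_one]
  rw [hprod]
  exact Subgroup.prod_mem H fun i hi => zpow_mem (ha i hi) _

theorem prod_zpow_mem_of_sum_fiber_eq_zero {β : Type*} [DecidableEq β] {H : Subgroup G}
    {a : ι → G} (f : ι → β) (ha : ∀ i j, f i = f j → a i / a j ∈ H) (s : Finset ι) {e : ι → ℤ}
    (he : ∀ b, ∑ i ∈ s with f i = b, e i = 0) :
    ∏ i ∈ s, a i ^ e i ∈ H := by
  rw [← Finset.prod_fiberwise_of_maps_to (fun i hi => Finset.mem_image_of_mem f hi)]
  refine Subgroup.prod_mem H fun b hb => ?_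
  obtain ⟨j, -, rfl⟩ := Finset.mem_image.mp hb
  exact prod_zpow_mem_of_div_mem_of_sum_eq_zero
    (fun i hi => ha i j (Finset.mem_filter.mp hi).2) (he (f j))

theorem div_iterate_mem_range_id_div (S : G →* G) (u : G) (n : ℕ) :
    u / S^[n] u ∈ (MonoidHom.id G / S).range := by
  induction n with
  | zero => simp
  | succ n ih =>
    rw [Function.iterate_succ_apply', ← div_mul_div_cancel u (S^[n] u)]
    exact mul_mem ih ⟨S^[n] u, rfl⟩

end CommGroup

section DedekindDomain

variable {R : Type*} [CommRing R] [IsDedekindDomain R] (K : Type*) [Field K] [Algebra R K]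
  [IsFractionRing R K]

noncomputable def IsDedekindDomain.HeightOneSpectrum.fractionalIdealUnit
    (v : HeightOneSpectrum R) : (FractionalIdeal R⁰ K)ˣ :=
  Units.mk0 v.asIdeal (FractionalIdeal.coeIdeal_ne_zero.mpr v.ne_bot)

theorem eq_prod_fractionalIdealUnit_zpow_count (I : (FractionalIdeal R⁰ K)ˣ)
    {s : Finset (HeightOneSpectrum R)} (hs : ∀ v ∉ s, FractionalIdeal.count K v I = 0) :
    I = ∏ v ∈ s, v.fractionalIdealUnit K ^ FractionalIdeal.count K v I := by
  refine Units.ext ?_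
  rw [Units.coe_prod]
  simp_rw [Units.val_zpow_eq_zpow_val, HeightOneSpectrum.fractionalIdealUnit, Units.val_mk0]
  rw [← finprod_eq_prod_of_mulSupport_subset,
    FractionalIdeal.finprod_heightOneSpectrum_factorization' K I.ne_zero]
  intro v hv
  by_contra hvs
  simp [hs v hvs] at hv

variable [Module.Free ℤ R] [Module.Finite ℤ R]

theorem absNorm_eq_prod_absNorm_zpow_count (I : (FractionalIdeal R⁰ K)ˣ)
    {s : Finset (HeightOneSpectrum R)} (hs : ∀ v ∉ s, FractionalIdeal.count K v I = 0) :
    FractionalIdeal.absNorm (I : FractionalIdeal R⁰ K) =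
      ∏ v ∈ s, (Ideal.absNorm v.asIdeal : ℚ) ^ FractionalIdeal.count K v I := by
  conv_lhs => rw [eq_prod_fractionalIdealUnit_zpow_count K I hs]
  simp_rw [Units.coe_prod, map_prod, Units.val_zpow_eq_zpow_val, map_zpow₀,
    HeightOneSpectrum.fractionalIdealUnit, Units.val_mk0, FractionalIdeal.coeIdeal_absNorm]

theorem padicValNat_absNorm (v : HeightOneSpectrum R) (ℓ : ℕ) [hℓ : Fact ℓ.Prime] :
    padicValNat ℓ (Ideal.absNorm v.asIdeal) =
      if Ideal.absNorm (v.asIdeal.under ℤ) = ℓ then v.asIdeal.inertiaDeg ℤ else 0 := by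
  have : NeZero v.asIdeal := ⟨v.ne_bot⟩
  rw [← Ideal.pow_inertiaDeg (Ideal.absNorm (v.asIdeal.under ℤ)) v.asIdeal]
  split_ifs with h
  · rw [h, padicValNat.prime_pow]
  · refine padicValNat.eq_zero_of_not_dvd fun hdvd => h ?_
    exact ((Nat.prime_dvd_prime_iff_eq hℓ.out (Nat.absNorm_under_prime v.asIdeal)).mp
      (hℓ.out.dvd_of_dvd_pow hdvd)).symm

theorem padicValRat_finset_prod {ι : Type*} (ℓ : ℕ) [Fact ℓ.Prime] (s : Finset ι) {q : ι → ℚ}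
    (hq : ∀ i ∈ s, q i ≠ 0) :
    padicValRat ℓ (∏ i ∈ s, q i) = ∑ i ∈ s, padicValRat ℓ (q i) := by
  classical
  induction s using Finset.induction_on with
  | empty => simp
  | insert i s hi ih =>
    rw [Finset.prod_insert hi, Finset.sum_insert hi, padicValRat.mul (hq i (by simp))
      (Finset.prod_ne_zero_iff.mpr fun j hj => hq j (by simp [hj])),
      ih fun j hj => hq j (by simp [hj])]

theorem padicValRat_absNorm (I : (FractionalIdeal R⁰ K)ˣ) {s : Finset (HeightOneSpectrum R)}
    (hs : ∀ v ∉ s, FractionalIdeal.count K v I = 0) (ℓ : ℕ) [Fact ℓ.Prime] :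
    padicValRat ℓ (FractionalIdeal.absNorm (I : FractionalIdeal R⁰ K)) =
      ∑ v ∈ s with Ideal.absNorm (v.asIdeal.under ℤ) = ℓ,
        FractionalIdeal.count K v I * v.asIdeal.inertiaDeg ℤ := by
  have hne : ∀ v : HeightOneSpectrum R, (Ideal.absNorm v.asIdeal : ℚ) ≠ 0 := fun v => by
    exact_mod_cast (Ideal.absNorm_eq_zero_iff.not.mpr v.ne_bot)
  rw [absNorm_eq_prod_absNorm_zpow_count K I hs,
    padicValRat_finset_prod ℓ s fun v _ => zpow_ne_zero _ (hne v), Finset.sum_filter]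
  refine Finset.sum_congr rfl fun v _ => ?_
  rw [padicValRat.zpow, padicValRat.of_nat, padicValNat_absNorm]
  split_ifs <;> simp

end DedekindDomain

section Galois

variable {K : Type*} [Field K] [NumberField K]

section Action

variable {σ : K ≃ₐ[ℚ] K} {S : (FractionalIdeal (𝓞 K)⁰ K)ˣ →* (FractionalIdeal (𝓞 K)⁰ K)ˣ}
  (hS : ∀ (I : (FractionalIdeal (𝓞 K)⁰ K)ˣ) (x : K),
    x ∈ (S I : FractionalIdeal (𝓞 K)⁰ K) ↔ ∃ y ∈ (I : FractionalIdeal (𝓞 K)⁰ K), σ y = x)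
include hS

theorem coe_apply_eq_coeIdeal_smul {u : (FractionalIdeal (𝓞 K)⁰ K)ˣ} {P : Ideal (𝓞 K)}
    (hu : (u : FractionalIdeal (𝓞 K)⁰ K) = P) :
    (S u : FractionalIdeal (𝓞 K)⁰ K) = ((σ • P : Ideal (𝓞 K)) : FractionalIdeal (𝓞 K)⁰ K) := by
  ext x
  simp only [hS, hu, FractionalIdeal.mem_coeIdeal, Ideal.mem_pointwise_smul_iff_inv_smul_mem]
  constructor
  · rintro ⟨_, ⟨y, hy, rfl⟩, rfl⟩
    exact ⟨σ • y, by rwa [inv_smul_smul], rfl⟩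
  · rintro ⟨y, hy, rfl⟩
    exact ⟨_, ⟨σ⁻¹ • y, hy, rfl⟩, congrArg (algebraMap (𝓞 K) K) (smul_inv_smul σ y)⟩

theorem coe_iterate_apply_eq_coeIdeal_pow_smul {u : (FractionalIdeal (𝓞 K)⁰ K)ˣ}
    {P : Ideal (𝓞 K)} (hu : (u : FractionalIdeal (𝓞 K)⁰ K) = P) (n : ℕ) :
    (S^[n] u : FractionalIdeal (𝓞 K)⁰ K) =
      ((σ ^ n • P : Ideal (𝓞 K)) : FractionalIdeal (𝓞 K)⁰ K) := by
  induction n with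
  | zero => rw [Function.iterate_zero_apply, pow_zero, one_smul, hu]
  | succ n ih =>
    rw [Function.iterate_succ_apply', coe_apply_eq_coeIdeal_smul hS ih, pow_succ', mul_smul]

end Action

variable [IsGalois ℚ K]

theorem exists_smul_eq_of_absNorm_under_eq {v w : HeightOneSpectrum (𝓞 K)}
    (h : Ideal.absNorm (v.asIdeal.under ℤ) = Ideal.absNorm (w.asIdeal.under ℤ)) :
    ∃ g : K ≃ₐ[ℚ] K, w.asIdeal = g • v.asIdeal :=
  Algebra.IsInvariant.exists_smul_of_under_eq ℤ (𝓞 K) (K ≃ₐ[ℚ] K) v.asIdeal w.asIdeal <| by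
    rw [← Int.ideal_span_absNorm_eq_self (v.asIdeal.under ℤ), h,
      Int.ideal_span_absNorm_eq_self]

theorem inertiaDeg_eq_of_absNorm_under_eq {v w : HeightOneSpectrum (𝓞 K)}
    (h : Ideal.absNorm (v.asIdeal.under ℤ) = Ideal.absNorm (w.asIdeal.under ℤ)) :
    w.asIdeal.inertiaDeg ℤ = v.asIdeal.inertiaDeg ℤ := by
  obtain ⟨g, hg⟩ := exists_smul_eq_of_absNorm_under_eq h
  rw [hg, Ideal.inertiaDeg_smul]

theorem sum_count_eq_zero_of_absNorm_eq_one (I : (FractionalIdeal (𝓞 K)⁰ K)ˣ)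
    (hI : FractionalIdeal.absNorm (I : FractionalIdeal (𝓞 K)⁰ K) = 1)
    {s : Finset (HeightOneSpectrum (𝓞 K))} (hs : ∀ v ∉ s, FractionalIdeal.count K v I = 0)
    (ℓ : ℕ) :
    ∑ v ∈ s with Ideal.absNorm (v.asIdeal.under ℤ) = ℓ, FractionalIdeal.count K v I = 0 := by
  obtain ⟨v₀, hv₀⟩ | hempty :=
    (s.filter fun v => Ideal.absNorm (v.asIdeal.under ℤ) = ℓ).eq_empty_or_nonempty.symm
  · have hℓ : Ideal.absNorm (v₀.asIdeal.under ℤ) = ℓ := (Finset.mem_filter.mp hv₀).2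
    have : NeZero v₀.asIdeal := ⟨v₀.ne_bot⟩
    have : Fact ℓ.Prime := ⟨hℓ ▸ Nat.absNorm_under_prime v₀.asIdeal⟩
    have hval := padicValRat_absNorm K I hs ℓ
    rw [hI, padicValRat.one, Finset.sum_congr rfl fun v hv => by
      rw [inertiaDeg_eq_of_absNorm_under_eq (hℓ.trans (Finset.mem_filter.mp hv).2.symm)],
      ← Finset.sum_mul] at hval
    exact (mul_eq_zero.mp hval.symm).resolve_right
      (by exact_mod_cast (Ideal.inertiaDeg_pos _ _).ne')
  · rw [hempty, Finset.sum_empty]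

end Galois

theorem AlgEquiv.exists_pow_eq_of_orderOf_eq_finrank {F E : Type*} [Field F] [Field E]
    [Algebra F E] [FiniteDimensional F E] [IsGalois F E] {σ : E ≃ₐ[F] E}
    (hσ : orderOf σ = Module.finrank F E) (g : E ≃ₐ[F] E) : ∃ n : ℕ, σ ^ n = g := by
  have htop : Subgroup.zpowers σ = ⊤ := Subgroup.eq_top_of_card_eq _ <| by
    rw [Nat.card_zpowers, hσ, IsGalois.card_aut_eq_finrank]
  exact mem_powers_iff_mem_zpowers.mpr (htop ▸ Subgroup.mem_top g)

theorem ker_norm_eq_image_one_sub_sigma_general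
    (p : ℕ)
    (K : Type*) [Field K] [NumberField K] [IsGalois ℚ K]
    (hdeg : Module.finrank ℚ K = p)
    (σ : K ≃ₐ[ℚ] K) (hσ : orderOf σ = p)
    (S : (FractionalIdeal (𝓞 K)⁰ K)ˣ →* (FractionalIdeal (𝓞 K)⁰ K)ˣ)
    (hS : ∀ (I : (FractionalIdeal (𝓞 K)⁰ K)ˣ) (x : K),
      x ∈ (S I : FractionalIdeal (𝓞 K)⁰ K) ↔
        ∃ y ∈ (I : FractionalIdeal (𝓞 K)⁰ K), σ y = x) :
    ∀ I : (FractionalIdeal (𝓞 K)⁰ K)ˣ,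
      FractionalIdeal.absNorm (I : FractionalIdeal (𝓞 K)⁰ K) = 1 →
        ∃ A : (FractionalIdeal (𝓞 K)⁰ K)ˣ, I = A * (S A)⁻¹ := by
  intro I hI
  obtain ⟨s, hs⟩ : ∃ s : Finset (HeightOneSpectrum (𝓞 K)),
      ∀ v ∉ s, FractionalIdeal.count K v I = 0 := by
    have hfin := Filter.eventually_cofinite.mp
      (FractionalIdeal.finite_factors (I : FractionalIdeal (𝓞 K)⁰ K))
    exact ⟨hfin.toFinset, fun v hv => not_not.mp fun h => hv (hfin.mem_toFinset.mpr h)⟩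
  suffices hI' : I ∈ (MonoidHom.id _ / S).range by
    obtain ⟨A, hA⟩ := hI'
    exact ⟨A, by rw [← hA, MonoidHom.div_apply, div_eq_mul_inv]; rfl⟩
  rw [eq_prod_fractionalIdealUnit_zpow_count K I hs]
  refine prod_zpow_mem_of_sum_fiber_eq_zero (fun v => Ideal.absNorm (v.asIdeal.under ℤ))
    (fun v w hvw => ?_) s ?_
  · obtain ⟨g, hg⟩ := exists_smul_eq_of_absNorm_under_eq hvw
    obtain ⟨n, rfl⟩ := AlgEquiv.exists_pow_eq_of_orderOf_eq_finrank (hσ.trans hdeg.symm) g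
    have hw : w.fractionalIdealUnit K = S^[n] (v.fractionalIdealUnit K) :=
      Units.ext <| by rw [coe_iterate_apply_eq_coeIdeal_pow_smul hS rfl n, ← hg]; rfl
    rw [hw]
    exact div_iterate_mem_range_id_div S _ n
  · exact sum_count_eq_zero_of_absNorm_eq_one I hI hs

/-- Let `K/ℚ` be cyclic of prime degree `p` with Galois group generated by `σ`
(of order `p`).  Let `S` be the induced action of `σ` on the group `J` of
(invertible) fractional ideals of `K`, characterized by
`x ∈ σ(I) ↔ ∃ y ∈ I, σ y = x`.  Since the base field is `ℚ`, the relative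
ideal norm `N_{K/ℚ}(I)` is the ideal of `ℤ` generated by the absolute norm;
thus `N(I) = (1)` is equivalent to `absNorm I = 1` (the absolute norm of an
invertible fractional ideal being positive).  Then every fractional ideal of
norm `(1)` lies in the image of `I ↦ I ⬝ σ(I)⁻¹`:
`ker N / im (1 - σ)` is trivial. -/
theorem ker_norm_eq_image_one_sub_sigma
    (p : ℕ) (hp : p.Prime)
    (K : Type*) [Field K] [NumberField K] [IsGalois ℚ K]
    (hdeg : Module.finrank ℚ K = p)
    (σ : K ≃ₐ[ℚ] K) (hσ : orderOf σ = p)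
    (S : (FractionalIdeal (𝓞 K)⁰ K)ˣ →* (FractionalIdeal (𝓞 K)⁰ K)ˣ)
    (hS : ∀ (I : (FractionalIdeal (𝓞 K)⁰ K)ˣ) (x : K),
      x ∈ (S I : FractionalIdeal (𝓞 K)⁰ K) ↔
        ∃ y ∈ (I : FractionalIdeal (𝓞 K)⁰ K), σ y = x) :
    ∀ I : (FractionalIdeal (𝓞 K)⁰ K)ˣ,
      FractionalIdeal.absNorm (I : FractionalIdeal (𝓞 K)⁰ K) = 1 →
        ∃ A : (FractionalIdeal (𝓞 K)⁰ K)ˣ, I = A * (S A)⁻¹ :=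
  ker_norm_eq_image_one_sub_sigma_general p K hdeg σ hσ S hS
end

section
/- Let p be prime and define Φ: (Z/pZ)² × (Z/pZ)² → Z/pZ by Φ((u₁,u₂),(v₁,v₂)) = u₁(v₂-u₂), and for u,v ∈ ((Z/pZ)²)^k define Φ_k(u,v) = ∑_{i=1}^k Φ(u_i,v_i). Call a set U ⊆ F_p^{2k} unlinked if Φ_k(u,v) = 0 for all u,v ∈ U. If U is a maximal unlinked set and a ∈ U, then U - a is an F_p-linear subspace of F_p^{2k}. -/
open Finset

/-- `Φ_k(u,v) = ∑ i, u_{i1} (v_{i2} - u_{i2})` on `𝔽_p^{2k}`, realized as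
`Fin k → ZMod p × ZMod p` (first component = odd coordinate, second
component = even coordinate). -/
def Phik (p k : ℕ) (u v : Fin k → ZMod p × ZMod p) : ZMod p :=
  ∑ i, (u i).1 * ((v i).2 - (u i).2)

/-- A set is unlinked if `Φ_k` vanishes on all ordered pairs from it. -/
def Unlinked (p k : ℕ) (U : Set (Fin k → ZMod p × ZMod p)) : Prop :=
  ∀ u ∈ U, ∀ v ∈ U, Phik p k u v = 0

/-- A maximal unlinked set: unlinked and not properly contained in any other
unlinked set. -/
def MaximalUnlinked (p k : ℕ) (U : Set (Fin k → ZMod p × ZMod p)) : Prop :=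
  Unlinked p k U ∧ ∀ U', Unlinked p k U' → U ⊆ U' → U' = U

/-- The bilinear form `B(u,v) = ∑ i, u_{i1} v_{i2}`. -/
def Bf (p k : ℕ) (u v : Fin k → ZMod p × ZMod p) : ZMod p :=
  ∑ i, (u i).1 * (v i).2

lemma Phik_eq (p k : ℕ) (u v : Fin k → ZMod p × ZMod p) :
    Phik p k u v = Bf p k u v - Bf p k u u := by
  simp [Phik, Bf, mul_sub, Finset.sum_sub_distrib]

lemma Bf_add_left (p k : ℕ) (u v w : Fin k → ZMod p × ZMod p) :
    Bf p k (u + v) w = Bf p k u w + Bf p k v w := by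
  simp [Bf, add_mul, Finset.sum_add_distrib]

lemma Bf_sub_left (p k : ℕ) (u v w : Fin k → ZMod p × ZMod p) :
    Bf p k (u - v) w = Bf p k u w - Bf p k v w := by
  simp [Bf, sub_mul, Finset.sum_sub_distrib]

lemma Bf_add_right (p k : ℕ) (u v w : Fin k → ZMod p × ZMod p) :
    Bf p k u (v + w) = Bf p k u v + Bf p k u w := by
  simp [Bf, mul_add, Finset.sum_add_distrib]

lemma Bf_sub_right (p k : ℕ) (u v w : Fin k → ZMod p × ZMod p) :
    Bf p k u (v - w) = Bf p k u v - Bf p k u w := by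
  simp [Bf, mul_sub, Finset.sum_sub_distrib]

lemma Bf_smul_left (p k : ℕ) (c : ZMod p) (u w : Fin k → ZMod p × ZMod p) :
    Bf p k (c • u) w = c * Bf p k u w := by
  simp [Bf, Finset.mul_sum, mul_assoc]

lemma Bf_smul_right (p k : ℕ) (c : ZMod p) (u w : Fin k → ZMod p × ZMod p) :
    Bf p k u (c • w) = c * Bf p k u w := by
  simp [Bf, Finset.mul_sum, mul_left_comm]

/-- If `U` is a maximal unlinked set in `𝔽_p^{2k}` and `a ∈ U`, then `U - a`
is an `𝔽_p`-linear subspace. -/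
theorem maximalUnlinked_sub_mem_is_subspace
    (p k : ℕ) (hp : p.Prime) (hk : 1 ≤ k)
    (U : Set (Fin k → ZMod p × ZMod p)) (hU : MaximalUnlinked p k U)
    (a : Fin k → ZMod p × ZMod p) (ha : a ∈ U) :
    ∃ V : Submodule (ZMod p) (Fin k → ZMod p × ZMod p),
      (V : Set (Fin k → ZMod p × ZMod p)) = (fun x => x - a) '' U := by
  have hB : ∀ u ∈ U, ∀ v ∈ U, Bf p k u v = Bf p k u u := by
    intro u hu v hv
    have h := hU.1 u hu v hv
    rw [Phik_eq] at h
    exact sub_eq_zero.mp h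
  have step : ∀ w, (∀ x ∈ U, Bf p k x w = Bf p k x x) →
      (∀ y ∈ U, Bf p k w y = Bf p k w w) → w ∈ U := by
    intro w h1 h2
    have hunl : Unlinked p k (insert w U) := by
      intro x hx y hy
      rw [Set.mem_insert_iff] at hx hy
      rw [Phik_eq, sub_eq_zero]
      rcases hx with rfl | hx
      · rcases hy with rfl | hy
        · rfl
        · exact h2 y hy
      · rcases hy with rfl | hy
        · exact h1 x hx
        · exact hB x hx y hy
    have h := hU.2 (insert w U) hunl (Set.subset_insert _ _)
    rw [← h]
    exact Set.mem_insert _ _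
  refine ⟨{
      carrier := (fun x => x - a) '' U
      zero_mem' := ⟨a, ha, sub_self a⟩
      add_mem' := ?_
      smul_mem' := ?_ }, rfl⟩
  · rintro x y ⟨u, hu, rfl⟩ ⟨v, hv, rfl⟩
    refine ⟨u + v - a, step (u + v - a) ?_ ?_, by dsimp only; abel⟩
    · intro x hx
      simp only [Bf_sub_right, Bf_add_right]
      rw [hB x hx u hu, hB x hx v hv, hB x hx a ha]
      ring
    · intro y hy
      simp only [Bf_sub_left, Bf_add_left, Bf_sub_right, Bf_add_right]
      rw [hB u hu y hy, hB v hv y hy, hB a ha y hy, hB u hu v hv, hB u hu a ha,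
        hB v hv u hu, hB v hv a ha, hB a ha u hu, hB a ha v hv]
      ring
  · rintro c x ⟨u, hu, rfl⟩
    refine ⟨a + c • (u - a), step (a + c • (u - a)) ?_ ?_, by dsimp only; rw [add_sub_cancel_left]⟩
    · intro x hx
      simp only [Bf_add_right, Bf_smul_right, Bf_sub_right]
      rw [hB x hx a ha, hB x hx u hu]
      ring
    · intro y hy
      simp only [Bf_add_left, Bf_smul_left, Bf_sub_left, Bf_add_right, Bf_smul_right,
        Bf_sub_right]
      rw [hB a ha y hy, hB u hu y hy, hB u hu a ha, hB a ha u hu]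
      ring
end

section
/- With Φ_k as above, let P: F_p^{2k} → F_p^k be the projection onto the even coordinates (u_{12},…,u_{k2}) and Q the projection onto odd coordinates. A subspace V ⊆ F_p^{2k} is such that some translate V + a is a maximal unlinked set if and only if V = P(V)^⊥ ⊕ P(V), where P(V)^⊥ is the orthogonal complement in F_p^k with respect to the standard bilinear form, and ⊕ refers to the decomposition F_p^{2k} = ker P ⊕ ker Q. -/
/-!
As `Φ(u, v) = Q u ⬝ P (v - u)`, a translate `V + a` is unlinked iff `Q (v + a) ⊥ P(V)` for all
`v ∈ V` (pair `v + a` with `(w + v) + a`), i.e., as `0 ∈ V`, iff `Q a ⊥ P(V)` and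
`V ≤ P(V)^⊥ ⊕ P(V)`. Every point of `P(V)^⊥ ⊕ P(V)`, shifted by `a`, is unlinked with all of
`V + a`, so maximality gives equality. Conversely, if `V = P(V)^⊥ ⊕ P(V)` then `V` is unlinked, and
a point `z` unlinked with all of `V` has `Q z ⊥ P(V)` (compare `Φ(z, v)` with `Φ(z, 0)`) and
`P z ∈ P(V)^⊥⊥ = P(V)`, so `z ∈ V`.
-/

open Finset

section DotPerp

variable {R ι : Type*} [CommRing R] [Fintype ι]

def dotPerp (W : Submodule R (ι → R)) : Submodule R (ι → R) :=
  W.dualAnnihilator.comap (dotProductBilin R R)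

theorem mem_dotPerp {W : Submodule R (ι → R)} {c : ι → R} :
    c ∈ dotPerp W ↔ ∀ w ∈ W, c ⬝ᵥ w = 0 := by
  simp [dotPerp, Submodule.mem_dualAnnihilator]

theorem forall_mem_dotPerp_dotProduct_eq_zero_iff {K : Type*} [Field K] [DecidableEq ι]
    (W : Submodule K (ι → K)) (z : ι → K) :
    (∀ c ∈ dotPerp W, c ⬝ᵥ z = 0) ↔ z ∈ W := by
  rw [← Subspace.forall_mem_dualAnnihilator_apply_eq_zero_iff]
  refine ⟨fun h φ hφ => ?_, fun h c hc => h _ hc⟩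
  obtain ⟨c, rfl⟩ := (dotProductEquiv K ι).surjective φ
  exact h c hφ

end DotPerp

section Projections

variable {R ι : Type*} [CommRing R]

-- The paper's `Q` and `P`.
def oddProj : (ι → R × R) →ₗ[R] ι → R := (LinearMap.fst R R R).compLeft ι

def evenProj : (ι → R × R) →ₗ[R] ι → R := (LinearMap.snd R R R).compLeft ι

@[simp] theorem oddProj_apply (x : ι → R × R) (i : ι) : oddProj x i = (x i).1 := rfl

@[simp] theorem evenProj_apply (x : ι → R × R) (i : ι) : evenProj x i = (x i).2 := rfl

variable [Fintype ι]

/-- `Q⁻¹(P(V)^⊥)` -/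
def oddPerp (V : Submodule R (ι → R × R)) : Submodule R (ι → R × R) :=
  (dotPerp (V.map evenProj)).comap oddProj

/-- `P(V)^⊥ ⊕ P(V)` -/
def perpOplus (V : Submodule R (ι → R × R)) : Submodule R (ι → R × R) :=
  oddPerp V ⊓ (V.map evenProj).comap evenProj

theorem mem_oddPerp {V : Submodule R (ι → R × R)} {x : ι → R × R} :
    x ∈ oddPerp V ↔ ∀ v ∈ V, oddProj x ⬝ᵥ evenProj v = 0 := by
  simp [oddPerp, mem_dotPerp]

theorem mem_perpOplus {V : Submodule R (ι → R × R)} {x : ι → R × R} :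
    x ∈ perpOplus V ↔
      (∀ v ∈ V, ∑ i, (x i).1 * (v i).2 = 0) ∧ ∃ v ∈ V, ∀ i, (x i).2 = (v i).2 := by
  simp only [perpOplus, Submodule.mem_inf, mem_oddPerp, Submodule.mem_comap, Submodule.mem_map,
    funext_iff, evenProj_apply, eq_comm]
  rfl

end Projections

section Unlinked

variable {p k : ℕ}

theorem Phik_eq_dotProduct (u v : Fin k → ZMod p × ZMod p) :
    Phik p k u v = oddProj u ⬝ᵥ evenProj (v - u) := rfl

theorem Phik_sub_Phik (u v w : Fin k → ZMod p × ZMod p) :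
    Phik p k u v - Phik p k u w = oddProj u ⬝ᵥ evenProj (v - w) := by
  simp only [Phik_eq_dotProduct, ← dotProduct_sub, ← map_sub, sub_sub_sub_cancel_right]

theorem Phik_eq_zero_of_mem_oddPerp {V : Submodule (ZMod p) (Fin k → ZMod p × ZMod p)}
    {u v : Fin k → ZMod p × ZMod p} (hu : u ∈ oddPerp V)
    (hvu : evenProj (v - u) ∈ V.map evenProj) : Phik p k u v = 0 :=
  (mem_dotPerp.1 hu) _ hvu

theorem MaximalUnlinked.mem_of_forall_Phik_eq_zero {U : Set (Fin k → ZMod p × ZMod p)}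
    (hU : MaximalUnlinked p k U) {x : Fin k → ZMod p × ZMod p}
    (hx : ∀ u ∈ U, Phik p k u x = 0 ∧ Phik p k x u = 0) : x ∈ U := by
  have hxx : Phik p k x x = 0 := by simp [Phik_eq_dotProduct]
  have hins : Unlinked p k (insert x U) := by
    rintro u (rfl | hu) v (rfl | hv)
    exacts [hxx, (hx v hv).2, (hx u hu).1, hU.1 u hu v hv]
  exact hU.2 _ hins (Set.subset_insert x U) ▸ Set.mem_insert x U

theorem add_mem_oddPerp_of_unlinked {V : Submodule (ZMod p) (Fin k → ZMod p × ZMod p)}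
    {a : Fin k → ZMod p × ZMod p} (hU : Unlinked p k ((· + a) '' (V : Set _)))
    {v : Fin k → ZMod p × ZMod p} (hv : v ∈ V) : v + a ∈ oddPerp V := by
  refine mem_oddPerp.2 fun w hw => ?_
  have := hU _ ⟨v, hv, rfl⟩ _ ⟨w + v, V.add_mem hw hv, rfl⟩
  rwa [Phik_eq_dotProduct, add_sub_add_right_eq_sub, add_sub_cancel_right] at this

theorem eq_perpOplus_of_maximalUnlinked_translate
    {V : Submodule (ZMod p) (Fin k → ZMod p × ZMod p)} {a : Fin k → ZMod p × ZMod p}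
    (hU : MaximalUnlinked p k ((· + a) '' (V : Set _))) : V = perpOplus V := by
  have ha : a ∈ oddPerp V := by simpa using add_mem_oddPerp_of_unlinked hU.1 V.zero_mem
  have hV : V ≤ oddPerp V := fun v hv => by
    simpa using sub_mem (add_mem_oddPerp_of_unlinked hU.1 hv) ha
  refine le_antisymm (le_inf hV (Submodule.le_comap_map _ _)) fun x hx => ?_
  obtain ⟨hx₁, hx₂ : evenProj x ∈ V.map evenProj⟩ := Submodule.mem_inf.1 hx
  have hxa : x + a ∈ oddPerp V := add_mem hx₁ ha
  have : x + a ∈ (· + a) '' (V : Set _) := by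
    refine hU.mem_of_forall_Phik_eq_zero ?_
    rintro _ ⟨v, hv, rfl⟩
    have hvP : evenProj v ∈ V.map evenProj := Submodule.mem_map_of_mem hv
    constructor
    · refine Phik_eq_zero_of_mem_oddPerp (add_mem (hV hv) ha) ?_
      simpa [add_sub_add_right_eq_sub] using sub_mem hx₂ hvP
    · refine Phik_eq_zero_of_mem_oddPerp hxa ?_
      simpa [add_sub_add_right_eq_sub] using sub_mem hvP hx₂
  simpa using this

theorem maximalUnlinked_of_eq_perpOplus [Fact p.Prime]
    {V : Submodule (ZMod p) (Fin k → ZMod p × ZMod p)} (hV : V = perpOplus V) :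
    MaximalUnlinked p k V := by
  have hVodd : V ≤ oddPerp V := hV.le.trans inf_le_left
  refine ⟨fun u hu v hv => Phik_eq_zero_of_mem_oddPerp (hVodd hu)
    (Submodule.mem_map_of_mem (sub_mem hv hu)), fun U hU hVU => ?_⟩
  refine Set.Subset.antisymm (fun z hz => ?_) hVU
  rw [SetLike.mem_coe, hV]
  refine Submodule.mem_inf.2 ⟨mem_oddPerp.2 fun v hv => ?_, ?_⟩
  · simpa [hU z hz v (hVU hv), hU z hz 0 (hVU V.zero_mem)] using (Phik_sub_Phik z v 0).symm
  · -- test `P z` against `P(V)^⊥` via the vectors `(c, 0)`, which lie in `V`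
    refine Submodule.mem_comap.2 <| (forall_mem_dotPerp_dotProduct_eq_zero_iff _ _).1 fun c hc => ?_
    have hcV : (fun i => (c i, 0)) ∈ V := by
      rw [hV]
      exact Submodule.mem_inf.2 ⟨hc, ⟨0, V.zero_mem, by ext; simp⟩⟩
    simpa [Phik, dotProduct] using hU _ (hVU hcV) z hz

end Unlinked

theorem translate_maximalUnlinked_iff_perp_oplus_general
    (p k : ℕ) (hp : p.Prime)
    (V : Submodule (ZMod p) (Fin k → ZMod p × ZMod p)) :
    (∃ a, MaximalUnlinked p k ((fun x => x + a) '' (V : Set _))) ↔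
      (∀ x : Fin k → ZMod p × ZMod p, x ∈ V ↔
        ((∀ v ∈ V, ∑ i, (x i).1 * (v i).2 = 0) ∧
          ∃ v ∈ V, ∀ i, (x i).2 = (v i).2)) := by
  have : Fact p.Prime := ⟨hp⟩
  simp_rw [← mem_perpOplus, ← SetLike.ext_iff]
  refine ⟨fun ⟨a, ha⟩ => eq_perpOplus_of_maximalUnlinked_translate ha, fun hV => ⟨0, ?_⟩⟩
  simpa using maximalUnlinked_of_eq_perpOplus hV

/-- A subspace `V ⊆ 𝔽_p^{2k}` has a translate `V + a` which is a maximal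
unlinked set if and only if `V = P(V)^⊥ ⊕ P(V)`, i.e. membership in `V` is
equivalent to: the odd-coordinate part is orthogonal to `P(V)` and the
even-coordinate part lies in `P(V)`, where `P` is projection onto even
coordinates. -/
theorem translate_maximalUnlinked_iff_perp_oplus
    (p k : ℕ) (hp : p.Prime) (hk : 1 ≤ k)
    (V : Submodule (ZMod p) (Fin k → ZMod p × ZMod p)) :
    (∃ a, MaximalUnlinked p k ((fun x => x + a) '' (V : Set _))) ↔
      (∀ x : Fin k → ZMod p × ZMod p, x ∈ V ↔
        ((∀ v ∈ V, ∑ i, (x i).1 * (v i).2 = 0) ∧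
          ∃ v ∈ V, ∀ i, (x i).2 = (v i).2)) :=
  translate_maximalUnlinked_iff_perp_oplus_general p k hp V
end

section
/- With Φ_k as above, every maximal unlinked set in F_p^{2k} has cardinality exactly p^k. -/
open Finset

/-!
Writing `u = (x, y)`, `Φ_k(u, v) = x_u ⬝ᵥ (y_v - y_u)`. If `U` is unlinked, then each `x_u` is
orthogonal to all differences `y_v - y_w`, i.e. to the direction `W` of the affine span `A` of the
`y`-parts of `U`; so `U ⊆ W^⊥ × A`. That set is itself unlinked, so for maximal `U` (nonempty,
since `{x = 0}` is unlinked) equality holds, and `|W^⊥| |A| = p ^ (dim W^⊥ + dim W) = p ^ k`.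
-/

open Module Matrix

section CommRing

variable {R ι : Type*} [CommRing R] [Fintype ι]

abbrev dotOrthogonal (W : Submodule R (ι → R)) : Submodule R (ι → R) :=
  LinearMap.BilinForm.orthogonal (dotProductBilin R R) W

theorem mem_dotOrthogonal {W : Submodule R (ι → R)} {x : ι → R} :
    x ∈ dotOrthogonal W ↔ ∀ w ∈ W, x ⬝ᵥ w = 0 := by
  simp [dotProduct_comm]

theorem dotProductBilin_nondegenerate :
    LinearMap.BilinForm.Nondegenerate (dotProductBilin R R : LinearMap.BilinForm R (ι → R)) := by
  classical
  refine (LinearMap.IsRefl.nondegenerate_iff_separatingLeft ?_).2 fun x hx => funext fun i => ?_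
  · exact fun x y h => by simpa [dotProduct_comm] using h
  · simpa using hx (Pi.single i 1)

/-- `W^⊥ × A` for `W` the direction of `A`: an affine Lagrangian subspace for the symplectic form
`ω((x, y), (x', y')) = x ⬝ᵥ y' - x' ⬝ᵥ y` on `(ι → R) × (ι → R)`. -/
def affineLagrangian (A : AffineSubspace R (ι → R)) : Set (ι → R × R) :=
  {w | Prod.fst ∘ w ∈ dotOrthogonal A.direction ∧ Prod.snd ∘ w ∈ A}

end CommRing

section Field

variable {K ι : Type*} [Field K] [Fintype ι]

theorem finrank_add_finrank_dotOrthogonal (W : Submodule K (ι → K)) :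
    finrank K W + finrank K (dotOrthogonal W) = Fintype.card ι := by
  have h := LinearMap.BilinForm.finrank_orthogonal dotProductBilin_nondegenerate W
  have := Submodule.finrank_le W
  rw [finrank_fintype_fun_eq_card] at h this
  rw [show finrank K (dotOrthogonal W) = _ from h]
  omega

theorem card_mul_card_dotOrthogonal [Finite K] (W : Submodule K (ι → K)) :
    Nat.card W * Nat.card (dotOrthogonal W) = Nat.card K ^ Fintype.card ι := by
  rw [natCard_eq_pow_finrank (K := K) (V := W),
    natCard_eq_pow_finrank (K := K) (V := dotOrthogonal W), ← pow_add,
    finrank_add_finrank_dotOrthogonal]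

theorem card_affineLagrangian [Finite K] {A : AffineSubspace K (ι → K)}
    (hA : (A : Set (ι → K)).Nonempty) :
    Nat.card (affineLagrangian A) = Nat.card K ^ Fintype.card ι := by
  have : Nonempty A := hA.to_subtype
  obtain ⟨c, hc⟩ := hA
  let e : affineLagrangian A ≃ dotOrthogonal A.direction × A :=
    ((Equiv.arrowProdEquivProdArrow ι _ _).subtypeEquiv fun _ => Iff.rfl).trans
      (Equiv.Set.prod _ _)
  calc Nat.card (affineLagrangian A) = Nat.card (dotOrthogonal A.direction) * Nat.card A := by
        rw [Nat.card_congr e, Nat.card_prod]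
    _ = Nat.card K ^ Fintype.card ι := by
        rw [← Nat.card_congr (Equiv.vaddConst (⟨c, hc⟩ : A)), mul_comm,
          card_mul_card_dotOrthogonal]

end Field

theorem phik_eq_zero_iff {p k : ℕ} {u v : Fin k → ZMod p × ZMod p} :
    Phik p k u v = 0 ↔
      (Prod.fst ∘ u) ⬝ᵥ (Prod.snd ∘ v) = (Prod.fst ∘ u) ⬝ᵥ (Prod.snd ∘ u) := by
  rw [← sub_eq_zero (a := _ ⬝ᵥ _), ← dotProduct_sub]
  rfl

theorem unlinked_affineLagrangian {p k : ℕ} (A : AffineSubspace (ZMod p) (Fin k → ZMod p)) :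
    Unlinked p k (affineLagrangian A) := by
  rintro u ⟨hux, huy⟩ v ⟨-, hvy⟩
  rw [phik_eq_zero_iff, ← sub_eq_zero, ← dotProduct_sub]
  exact mem_dotOrthogonal.1 hux _ (A.vsub_mem_direction hvy huy)

theorem Unlinked.subset_affineLagrangian {p k : ℕ} {U : Set (Fin k → ZMod p × ZMod p)}
    (hU : Unlinked p k U) :
    U ⊆ affineLagrangian (affineSpan (ZMod p) ((Prod.snd ∘ ·) '' U)) := by
  intro u hu
  refine ⟨?_, subset_affineSpan _ _ ⟨u, hu, rfl⟩⟩
  suffices vectorSpan (ZMod p) ((Prod.snd ∘ ·) '' U) ≤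
      LinearMap.ker (dotProductBilin (ZMod p) (ZMod p) (Prod.fst ∘ u)) by
    rw [direction_affineSpan, mem_dotOrthogonal]
    exact fun w hw => this hw
  rw [vectorSpan_def, Submodule.span_le]
  rintro _ ⟨_, ⟨v, hv, rfl⟩, _, ⟨w, hw, rfl⟩, rfl⟩
  simp [dotProduct_sub, phik_eq_zero_iff.1 (hU u hu v hv), phik_eq_zero_iff.1 (hU u hu w hw)]

theorem MaximalUnlinked.nonempty {p k : ℕ} {U : Set (Fin k → ZMod p × ZMod p)}
    (hU : MaximalUnlinked p k U) : U.Nonempty := by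
  rw [Set.nonempty_iff_ne_empty]
  rintro rfl
  have hflat : Unlinked p k {w | Prod.fst ∘ w = 0} := fun u hu v _ => by
    rw [phik_eq_zero_iff, Set.mem_ofPred.1 hu, zero_dotProduct, zero_dotProduct]
  have hzero : (0 : Fin k → ZMod p × ZMod p) ∈ {w | Prod.fst ∘ w = 0} := rfl
  exact (hU.2 _ hflat (Set.empty_subset _)).subset hzero

theorem card_maximalUnlinked_general (p k : ℕ) (hp : p.Prime)
    (U : Set (Fin k → ZMod p × ZMod p)) (hU : MaximalUnlinked p k U) :
    Nat.card U = p ^ k := by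
  have : Fact p.Prime := ⟨hp⟩
  set A := affineSpan (ZMod p) ((Prod.snd ∘ ·) '' U)
  have hUA : affineLagrangian A = U :=
    hU.2 _ (unlinked_affineLagrangian A) hU.1.subset_affineLagrangian
  have hA : (A : Set (Fin k → ZMod p)).Nonempty :=
    (hU.nonempty.image _).mono (subset_affineSpan _ _)
  rw [← hUA, card_affineLagrangian hA, Nat.card_zmod, Fintype.card_fin]

/-- Every maximal unlinked set in `𝔽_p^{2k}` has cardinality `p^k`. -/
theorem card_maximalUnlinked (p k : ℕ) (hp : p.Prime) (hk : 1 ≤ k)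
    (U : Set (Fin k → ZMod p × ZMod p)) (hU : MaximalUnlinked p k U) :
    Nat.card U = p ^ k :=
  card_maximalUnlinked_general p k hp U hU
end

section
/- With Φ_k as above, the intersection of two distinct maximal unlinked sets in F_p^{2k} has cardinality at most p^{k-1}. -/
open Finset

/-!
Write `a(u), b(u) ∈ 𝔽_p^k` for the first and second coordinates of `u`, so that
`Φ(u, v) = a(u) ⬝ (b(v) - b(u))`, and fix a common point `w₀` of `W = U ∩ U'`. Since
`Φ(u, w) - Φ(u, w₀) = a(u) ⬝ (b(w) - b(w₀))`, unlinkedness of `U` makes every `a(u)` orthogonal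
to every `b(w) - b(w₀)`, for `u, w ∈ U`. So the span `A` of the `a(w)`, `w ∈ W`, and the span `V`
of the `b(w) - b(w₀)`, `w ∈ W`, are orthogonal, and `w ↦ (a(w), b(w) - b(w₀))` embeds `W` into
`A × V`, giving `|W| ≤ p ^ (dim A + dim V) ≤ p ^ k`. If `dim A + dim V = k`, then `A` and `V`
are each other's orthogonal complements, which forces `a(z) ∈ A` and `b(z) - b(w₀) ∈ V` for every
`z` of `U` or of `U'`; then `U ∪ U'` is unlinked and maximality gives `U = U ∪ U' = U'`.
-/

open Module Matrix Set

namespace LinearMap.BilinForm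

lemma mem_orthogonal_span_iff {R M : Type*} [CommSemiring R] [AddCommMonoid M] [Module R M]
    {B : LinearMap.BilinForm R M} {s : Set M} {x : M} :
    x ∈ B.orthogonal (Submodule.span R s) ↔ ∀ y ∈ s, B y x = 0 :=
  Submodule.span_le (p := LinearMap.ker (B.flip x))

variable {K E : Type*} [Field K] [AddCommGroup E] [Module K E] [FiniteDimensional K E]
  {B : LinearMap.BilinForm K E} {W W' : Submodule K E}

lemma finrank_add_finrank_le_of_le_orthogonal (hB : B.Nondegenerate) (h : W' ≤ B.orthogonal W) :
    finrank K W + finrank K W' ≤ finrank K E := by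
  have hW' : finrank K W' ≤ finrank K E - finrank K W :=
    finrank_orthogonal hB W ▸ Submodule.finrank_mono h
  have hW := W.finrank_le
  omega

lemma eq_orthogonal_of_le_orthogonal (hB : B.Nondegenerate) (h : W' ≤ B.orthogonal W)
    (hdim : finrank K E ≤ finrank K W + finrank K W') : W' = B.orthogonal W :=
  Submodule.eq_of_le_of_finrank_le h (by rw [finrank_orthogonal hB]; omega)

end LinearMap.BilinForm

namespace Matrix

variable {n R : Type*} [Fintype n] [CommSemiring R]

lemma nondegenerate_dotProductBilin :
    LinearMap.BilinForm.Nondegenerate (dotProductBilin R R : LinearMap.BilinForm R (n → R)) :=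
  ⟨fun v hv => dotProduct_eq_zero v hv,
    fun w hw => dotProduct_eq_zero w fun v => (dotProduct_comm w v).trans (hw v)⟩

lemma isRefl_dotProductBilin :
    LinearMap.BilinForm.IsRefl (dotProductBilin R R : LinearMap.BilinForm R (n → R)) :=
  fun v w h => (dotProduct_comm w v).trans h

end Matrix

open LinearMap.BilinForm

variable {p k : ℕ}

lemma phik_eq_dotProduct (u v : Fin k → ZMod p × ZMod p) :
    Phik p k u v = (Prod.fst ∘ u) ⬝ᵥ (Prod.snd ∘ v - Prod.snd ∘ u) := rfl

def fstSpan (W : Set (Fin k → ZMod p × ZMod p)) : Submodule (ZMod p) (Fin k → ZMod p) :=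
  Submodule.span (ZMod p) ((Prod.fst ∘ ·) '' W)

def sndSpan (W : Set (Fin k → ZMod p × ZMod p)) (w₀ : Fin k → ZMod p × ZMod p) :
    Submodule (ZMod p) (Fin k → ZMod p) :=
  Submodule.span (ZMod p) ((fun w => Prod.snd ∘ w - Prod.snd ∘ w₀) '' W)

lemma unlinked_of_fst_mem_of_snd_sub_mem {A V : Submodule (ZMod p) (Fin k → ZMod p)}
    (hAV : V ≤ orthogonal (dotProductBilin (ZMod p) (ZMod p)) A) (c : Fin k → ZMod p)
    {S : Set (Fin k → ZMod p × ZMod p)}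
    (hS : ∀ z ∈ S, Prod.fst ∘ z ∈ A ∧ Prod.snd ∘ z - c ∈ V) : Unlinked p k S := by
  intro z hz z' hz'
  have orth : ∀ y ∈ S, (Prod.fst ∘ z) ⬝ᵥ (Prod.snd ∘ y - c) = 0 :=
    fun y hy => hAV (hS y hy).2 _ (hS z hz).1
  rw [phik_eq_dotProduct, ← sub_sub_sub_cancel_right _ _ c, dotProduct_sub, orth z' hz',
    orth z hz, sub_zero]

namespace Unlinked

variable {S W : Set (Fin k → ZMod p × ZMod p)} {u w w₀ z : Fin k → ZMod p × ZMod p}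

lemma dotProduct_sub_eq_zero (hS : Unlinked p k S) (hu : u ∈ S) (hw : w ∈ S) (hw₀ : w₀ ∈ S) :
    (Prod.fst ∘ u) ⬝ᵥ (Prod.snd ∘ w - Prod.snd ∘ w₀) = 0 := by
  have huw := hS u hu w hw
  have huw₀ := hS u hu w₀ hw₀
  rw [phik_eq_dotProduct] at huw huw₀
  rw [← sub_sub_sub_cancel_right _ _ (Prod.snd ∘ u), dotProduct_sub, huw, huw₀, sub_zero]

lemma snd_sub_mem_orthogonal_fstSpan (hS : Unlinked p k S) (hW : W ⊆ S) (hw₀ : w₀ ∈ S)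
    (hz : z ∈ S) :
    Prod.snd ∘ z - Prod.snd ∘ w₀ ∈ orthogonal (dotProductBilin (ZMod p) (ZMod p)) (fstSpan W) := by
  rw [fstSpan, mem_orthogonal_span_iff]
  rintro _ ⟨w, hw, rfl⟩
  exact hS.dotProduct_sub_eq_zero (hW hw) hz hw₀

lemma fst_mem_orthogonal_sndSpan (hS : Unlinked p k S) (hW : W ⊆ S) (hw₀ : w₀ ∈ S)
    (hz : z ∈ S) :
    Prod.fst ∘ z ∈ orthogonal (dotProductBilin (ZMod p) (ZMod p)) (sndSpan W w₀) := by
  rw [sndSpan, mem_orthogonal_span_iff]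
  rintro _ ⟨w, hw, rfl⟩
  exact (dotProduct_comm _ _).trans (hS.dotProduct_sub_eq_zero hz (hW hw) hw₀)

lemma sndSpan_le_orthogonal_fstSpan (hS : Unlinked p k S) (hW : W ⊆ S) (hw₀ : w₀ ∈ S) :
    sndSpan W w₀ ≤ orthogonal (dotProductBilin (ZMod p) (ZMod p)) (fstSpan W) :=
  Submodule.span_le.2 <| by
    rintro _ ⟨w, hw, rfl⟩
    exact hS.snd_sub_mem_orthogonal_fstSpan hW hw₀ (hW hw)

variable [Fact p.Prime]

lemma finrank_fstSpan_add_finrank_sndSpan_le (hS : Unlinked p k S) (hW : W ⊆ S) (hw₀ : w₀ ∈ S) :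
    finrank (ZMod p) (fstSpan W) + finrank (ZMod p) (sndSpan W w₀) ≤ k := by
  simpa using finrank_add_finrank_le_of_le_orthogonal nondegenerate_dotProductBilin
    (hS.sndSpan_le_orthogonal_fstSpan hW hw₀)

lemma mem_fstSpan_and_snd_sub_mem_sndSpan (hS : Unlinked p k S) (hW : W ⊆ S) (hw₀ : w₀ ∈ S)
    (hdim : k ≤ finrank (ZMod p) (fstSpan W) + finrank (ZMod p) (sndSpan W w₀)) (hz : z ∈ S) :
    Prod.fst ∘ z ∈ fstSpan W ∧ Prod.snd ∘ z - Prod.snd ∘ w₀ ∈ sndSpan W w₀ := by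
  have hV : sndSpan W w₀ = orthogonal (dotProductBilin (ZMod p) (ZMod p)) (fstSpan W) :=
    eq_orthogonal_of_le_orthogonal nondegenerate_dotProductBilin
      (hS.sndSpan_le_orthogonal_fstSpan hW hw₀) (by simpa using hdim)
  have hA : fstSpan W = orthogonal (dotProductBilin (ZMod p) (ZMod p)) (sndSpan W w₀) := by
    rw [hV, orthogonal_orthogonal nondegenerate_dotProductBilin isRefl_dotProductBilin]
  exact ⟨hA ▸ hS.fst_mem_orthogonal_sndSpan hW hw₀ hz,
    hV ▸ hS.snd_sub_mem_orthogonal_fstSpan hW hw₀ hz⟩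

lemma union_of_le_finrank {U U' : Set (Fin k → ZMod p × ZMod p)} (hU : Unlinked p k U)
    (hU' : Unlinked p k U') (hw₀ : w₀ ∈ U ∩ U')
    (hdim : k ≤ finrank (ZMod p) (fstSpan (U ∩ U')) + finrank (ZMod p) (sndSpan (U ∩ U') w₀)) :
    Unlinked p k (U ∪ U') := by
  refine unlinked_of_fst_mem_of_snd_sub_mem
    (hU.sndSpan_le_orthogonal_fstSpan (W := U ∩ U') inter_subset_left hw₀.1)
    (Prod.snd ∘ w₀) ?_
  rintro z (hz | hz)
  · exact hU.mem_fstSpan_and_snd_sub_mem_sndSpan inter_subset_left hw₀.1 hdim hz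
  · exact hU'.mem_fstSpan_and_snd_sub_mem_sndSpan inter_subset_right hw₀.2 hdim hz

end Unlinked

lemma MaximalUnlinked.eq_of_unlinked_union {U U' : Set (Fin k → ZMod p × ZMod p)}
    (hU : MaximalUnlinked p k U) (hU' : MaximalUnlinked p k U') (h : Unlinked p k (U ∪ U')) :
    U = U' :=
  (hU.2 _ h subset_union_left).symm.trans (hU'.2 _ h subset_union_right)

lemma natCard_le_pow_finrank_fstSpan_add_finrank_sndSpan [Fact p.Prime]
    (W : Set (Fin k → ZMod p × ZMod p)) (w₀ : Fin k → ZMod p × ZMod p) :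
    Nat.card W ≤ p ^ (finrank (ZMod p) (fstSpan W) + finrank (ZMod p) (sndSpan W w₀)) := by
  let f : W → fstSpan W × sndSpan W w₀ := fun w =>
    (⟨_, Submodule.subset_span ⟨w, w.2, rfl⟩⟩, ⟨_, Submodule.subset_span ⟨w, w.2, rfl⟩⟩)
  have hf : Function.Injective f := by
    rintro ⟨w, hw⟩ ⟨w', hw'⟩ h
    simp only [f, Prod.mk.injEq, Subtype.ext_iff, sub_left_inj] at h
    exact Subtype.ext <| funext fun i => Prod.ext (congrFun h.1 i) (congrFun h.2 i)
  calc Nat.card W ≤ Nat.card (fstSpan W × sndSpan W w₀) := Nat.card_le_card_of_injective f hf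
    _ = _ := by
      rw [Nat.card_prod, natCard_eq_pow_finrank (K := ZMod p) (V := fstSpan W),
        natCard_eq_pow_finrank (K := ZMod p) (V := sndSpan W w₀), Nat.card_zmod, pow_add]

theorem card_inter_maximalUnlinked_le_general (p k : ℕ) (hp : p.Prime)
    (U U' : Set (Fin k → ZMod p × ZMod p))
    (hU : MaximalUnlinked p k U) (hU' : MaximalUnlinked p k U') (hne : U ≠ U') :
    Nat.card ↥(U ∩ U') ≤ p ^ (k - 1) := by
  have := Fact.mk hp
  obtain hW | ⟨w₀, hw₀⟩ := (U ∩ U').eq_empty_or_nonempty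
  · simp [hW]
  have hdim :
      finrank (ZMod p) (fstSpan (U ∩ U')) + finrank (ZMod p) (sndSpan (U ∩ U') w₀) ≤ k - 1 := by
    have := hU.1.finrank_fstSpan_add_finrank_sndSpan_le (W := U ∩ U') inter_subset_left hw₀.1
    by_contra! hfull
    exact hne (hU.eq_of_unlinked_union hU' (hU.1.union_of_le_finrank hU'.1 hw₀ (by omega)))
  exact (natCard_le_pow_finrank_fstSpan_add_finrank_sndSpan _ w₀).trans
    (Nat.pow_le_pow_right hp.pos hdim)

/-- The intersection of two distinct maximal unlinked sets in `𝔽_p^{2k}` has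
cardinality at most `p^(k-1)`. -/
theorem card_inter_maximalUnlinked_le (p k : ℕ) (hp : p.Prime) (hk : 1 ≤ k)
    (U U' : Set (Fin k → ZMod p × ZMod p))
    (hU : MaximalUnlinked p k U) (hU' : MaximalUnlinked p k U') (hne : U ≠ U') :
    Nat.card ↥(U ∩ U') ≤ p ^ (k - 1) :=
  card_inter_maximalUnlinked_le_general p k hp U U' hU hU' hne
end

section
/- Let n(k,r) be the number of r-dimensional subspaces of F_p^k and N(m,p) = ∑_{r=0}^m n(m,r) the total number of subspaces of F_p^m. Then ∑_{r=0}^k p^r · n(k,r) = N(k+1,p) - N(k,p). -/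
/-- The submodules of `V × K` are in bijection with submodules of `V` (those containing
`{0} × K`, of the form `U × K`) together with partial linear maps `V →ₗ.[K] K`
(whose graphs give the remaining submodules). -/
noncomputable def submoduleProdEquiv (K V : Type*) [Field K] [AddCommGroup V] [Module K V] :
    Submodule K (V × K) ≃ (Submodule K V) ⊕ (V →ₗ.[K] K) := by
  refine (Equiv.ofBijective
    (fun x => Sum.elim (fun U => U.prod ⊤) (fun f => f.graph) x) ⟨?_, ?_⟩).symm
  · rintro (U | f) (U' | f') h
    · simp only [Sum.elim_inl] at h
      refine congrArg Sum.inl (Submodule.ext fun u => ?_)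
      have := Submodule.ext_iff.mp h (u, 0)
      simpa [Submodule.mem_prod] using this
    · exfalso
      have h1 : ((0 : V), (1 : K)) ∈ U.prod (⊤ : Submodule K K) :=
        ⟨U.zero_mem, trivial⟩
      simp only [Sum.elim_inl, Sum.elim_inr] at h
      rw [h] at h1
      exact one_ne_zero (f'.graph_fst_eq_zero_snd h1 rfl)
    · exfalso
      have h1 : ((0 : V), (1 : K)) ∈ U'.prod (⊤ : Submodule K K) :=
        ⟨U'.zero_mem, trivial⟩
      simp only [Sum.elim_inl, Sum.elim_inr] at h
      rw [← h] at h1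
      exact one_ne_zero (f.graph_fst_eq_zero_snd h1 rfl)
    · exact congrArg Sum.inr (LinearPMap.eq_of_eq_graph h)
  · intro W
    by_cases h : ((0 : V), (1 : K)) ∈ W
    · refine ⟨Sum.inl (W.map (LinearMap.fst K V K)), ?_⟩
      simp only [Sum.elim_inl]
      ext ⟨u, c⟩
      simp only [Submodule.mem_prod, Submodule.mem_map, Submodule.mem_top, and_true]
      constructor
      · rintro ⟨⟨u', c'⟩, hw, rfl⟩
        have : ((u', c') : V × K) + (c - c') • ((0 : V), (1 : K)) = (u', c) := by
          simp [Prod.ext_iff]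
        simpa [this] using W.add_mem hw (W.smul_mem (c - c') h)
      · intro hw
        exact ⟨(u, c), hw, rfl⟩
    · refine ⟨Sum.inr W.toLinearPMap, ?_⟩
      simp only [Sum.elim_inr]
      refine W.toLinearPMap_graph_eq ?_
      rintro ⟨a, c⟩ hx (rfl : a = 0)
      by_contra hc
      exact h (by simpa [hc] using W.smul_mem c⁻¹ hx)

/-- A partial linear map is a pair of a domain and a linear map on it. -/
def pmapEquivSigma (K V : Type*) [Field K] [AddCommGroup V] [Module K V] :
    (V →ₗ.[K] K) ≃ Σ U : Submodule K V, (U →ₗ[K] K) where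
  toFun f := ⟨f.domain, f.toFun⟩
  invFun s := ⟨s.1, s.2⟩
  left_inv _ := rfl
  right_inv _ := rfl

/-- The number of partial linear maps `𝔽_p^k →ₗ. 𝔽_p` is `∑_r p^r n(k,r)`. -/
theorem card_pmap (p k : ℕ) (hp : p.Prime) :
    haveI : Fact p.Prime := ⟨hp⟩
    Nat.card ((Fin k → ZMod p) →ₗ.[ZMod p] ZMod p) =
      ∑ r ∈ Finset.range (k + 1),
        p ^ r * Nat.card {W : Submodule (ZMod p) (Fin k → ZMod p) //
          Module.finrank (ZMod p) W = r} := by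
  haveI : Fact p.Prime := ⟨hp⟩
  set K := ZMod p
  set V := Fin k → K
  haveI : Finite (Submodule K V) := Finite.of_injective _ SetLike.coe_injective
  haveI := Fintype.ofFinite (Submodule K V)
  haveI : ∀ U : Submodule K V, Finite (U →ₗ[K] K) := fun U =>
    Finite.of_injective (fun f => (f : U → K)) fun f g h => by ext x; exact congrFun h x
  haveI : ∀ U : Submodule K V, Fintype (U →ₗ[K] K) := fun U => Fintype.ofFinite _
  rw [Nat.card_congr (pmapEquivSigma K V), Nat.card_eq_fintype_card, Fintype.card_sigma]
  have hcard : ∀ U : Submodule K V, Fintype.card (U →ₗ[K] K) = p ^ Module.finrank K U := by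
    intro U
    rw [Module.card_eq_pow_finrank (K := K), Module.finrank_linearMap K K U K,
      Module.finrank_self, mul_one, ZMod.card]
  have hmaps : ∀ U ∈ Finset.univ (α := Submodule K V),
      Module.finrank K U ∈ Finset.range (k + 1) := by
    intro U _
    rw [Finset.mem_range, Nat.lt_succ_iff]
    simpa [V, Module.finrank_fin_fun] using U.finrank_le
  rw [← Finset.sum_fiberwise_of_maps_to hmaps (fun U => Fintype.card (U →ₗ[K] K))]
  refine Finset.sum_congr rfl fun r _ => ?_
  rw [Finset.sum_congr rfl (g := fun _ => p ^ r) (fun U hU => by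
    simp only [Finset.mem_filter] at hU
    rw [hcard, hU.2]), Finset.sum_const, smul_eq_mul, mul_comm]
  congr 1
  rw [Nat.card_eq_fintype_card, Fintype.card_subtype]

/-- With `n(k,r)` the number of `r`-dimensional subspaces of `𝔽_p^k` and
`N(m,p)` the total number of subspaces of `𝔽_p^m`, one has
`∑_{r=0}^k p^r n(k,r) = N(k+1,p) - N(k,p)`. -/
theorem sum_pow_mul_card_subspaces (p k : ℕ) (hp : p.Prime) :
    ∑ r ∈ Finset.range (k + 1),
        p ^ r * Nat.card {W : Submodule (ZMod p) (Fin k → ZMod p) //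
          Module.finrank (ZMod p) W = r} =
      Nat.card (Submodule (ZMod p) (Fin (k + 1) → ZMod p)) -
        Nat.card (Submodule (ZMod p) (Fin k → ZMod p)) := by
  haveI : Fact p.Prime := ⟨hp⟩
  set K := ZMod p
  set V := Fin k → K
  haveI : Finite (Submodule K V) := Finite.of_injective _ SetLike.coe_injective
  haveI : Finite ((V × K)) := inferInstanceAs (Finite ((Fin k → K) × K))
  haveI : Finite (Submodule K (V × K)) := Finite.of_injective _ SetLike.coe_injective
  haveI : Finite (V →ₗ.[K] K) :=
    Finite.of_injective LinearPMap.graph fun f g h => LinearPMap.eq_of_eq_graph h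
  -- `𝔽_p^{k+1} ≃ₗ V × K`
  have e : (Fin (k + 1) → K) ≃ₗ[K] V × K :=
    LinearEquiv.ofFinrankEq _ _ (by
      rw [Module.finrank_fin_fun, Module.finrank_prod, Module.finrank_self,
        Module.finrank_fin_fun])
  have h1 : Nat.card (Submodule K (Fin (k + 1) → K)) = Nat.card (Submodule K (V × K)) :=
    Nat.card_congr (Submodule.orderIsoMapComap e).toEquiv
  have h2 : Nat.card (Submodule K (V × K)) =
      Nat.card (Submodule K V) + Nat.card (V →ₗ.[K] K) := by
    rw [Nat.card_congr (submoduleProdEquiv K V), Nat.card_sum]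
  rw [h1, h2, card_pmap p k hp, Nat.add_sub_cancel_left]
end
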